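/- arXiv:1210.5123 — 8 statements merged into one kernel-verified Lean document; each statement's English description precedes it below -/
import Mathlib

section
/- For all functions G₁, G₂ : Finset X → ℝ and every finset γ of X, the K-transform turns the ⋆-convolution into a pointwise product: ∑_{η ⊆ γ} (G₁ ⋆ G₂)(η) = (∑_{η ⊆ γ} G₁(η)) · (∑_{η ⊆ γ} G₂(η)), i.e., K(G₁ ⋆ G₂)(γ) = (KG₁)(γ)·(KG₂)(γ). -/
open Finset

/-- The ⋆-convolution: `(G₁ ⋆ G₂)(η) = ∑_{ξ₁ ∪ ξ₂ = η} G₁ ξ₁ · G₂ ξ₂`,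
summed over ordered pairs of subsets of `η` whose union is `η`. -/
def starConv {X : Type*} [DecidableEq X] (G₁ G₂ : Finset X → ℝ) (η : Finset X) : ℝ :=
  ∑ p ∈ (η.powerset ×ˢ η.powerset).filter (fun p => p.1 ∪ p.2 = η), G₁ p.1 * G₂ p.2

/-- The K-transform is a combinatorial Fourier transform w.r.t. the ⋆-convolution:
`K(G₁ ⋆ G₂)(γ) = (KG₁)(γ) · (KG₂)(γ)`. -/
theorem K_starConv {X : Type*} [DecidableEq X] (G₁ G₂ : Finset X → ℝ) (γ : Finset X) :
    ∑ η ∈ γ.powerset, starConv G₁ G₂ η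
      = (∑ η ∈ γ.powerset, G₁ η) * (∑ η ∈ γ.powerset, G₂ η) := by
  have h : ∀ η ∈ γ.powerset,
      (η.powerset ×ˢ η.powerset).filter (fun p => p.1 ∪ p.2 = η)
        = (γ.powerset ×ˢ γ.powerset).filter (fun p => p.1 ∪ p.2 = η) := by
    intro η hη
    rw [mem_powerset] at hη
    ext p
    simp only [mem_filter, mem_product, mem_powerset]
    constructor
    · rintro ⟨⟨h1, h2⟩, h3⟩
      exact ⟨⟨h1.trans hη, h2.trans hη⟩, h3⟩
    · rintro ⟨⟨h1, h2⟩, h3⟩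
      exact ⟨⟨h3 ▸ subset_union_left, h3 ▸ subset_union_right⟩, h3⟩
  calc ∑ η ∈ γ.powerset, starConv G₁ G₂ η
      = ∑ η ∈ γ.powerset,
          ∑ p ∈ (γ.powerset ×ˢ γ.powerset).filter (fun p => p.1 ∪ p.2 = η),
            G₁ p.1 * G₂ p.2 := Finset.sum_congr rfl (fun η hη => by rw [starConv, h η hη])
    _ = ∑ p ∈ γ.powerset ×ˢ γ.powerset, G₁ p.1 * G₂ p.2 := by
        apply Finset.sum_fiberwise_of_maps_to
        intro p hp
        rw [mem_product, mem_powerset, mem_powerset] at hp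
        exact mem_powerset.2 (union_subset hp.1 hp.2)
    _ = (∑ η ∈ γ.powerset, G₁ η) * (∑ η ∈ γ.powerset, G₂ η) := by
        rw [Finset.sum_mul_sum, Finset.sum_product]
end

section
/- For all functions F₁, F₂ : Finset X → ℝ and every finset η of X, the inverse K-transform turns pointwise products into ⋆-convolutions: K⁻¹(F₁·F₂)(η) = ((K⁻¹F₁) ⋆ (K⁻¹F₂))(η), where (F₁·F₂)(γ) := F₁(γ)·F₂(γ). -/
open Finset

/-- The inverse K-transform: `(K⁻¹F)(η) = ∑_{ξ ⊆ η} (−1)^{|η ∖ ξ|} F ξ`. -/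
def Kinv {X : Type*} [DecidableEq X] (F : Finset X → ℝ) (η : Finset X) : ℝ :=
  ∑ ξ ∈ η.powerset, (-1 : ℝ) ^ ((η \ ξ).card) * F ξ

lemma neg_one_pow_sum {X : Type*} [DecidableEq X] (x : Finset X) :
    ∑ m ∈ x.powerset, (-1 : ℝ) ^ m.card = if x = ∅ then 1 else 0 := by
  have h := Finset.sum_powerset_neg_one_pow_card (x := x)
  have : ((∑ m ∈ x.powerset, (-1 : ℤ) ^ m.card : ℤ) : ℝ)
      = ∑ m ∈ x.powerset, (-1 : ℝ) ^ m.card := by push_cast; rfl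
  rw [← this, h]
  split_ifs <;> simp

/-- Alternating sum over `{ξ : α ⊆ ξ ⊆ η}` of `(-1)^{|η ∖ ξ|}`. -/
lemma alt_sum_sdiff_top {X : Type*} [DecidableEq X] {α η : Finset X} (hαη : α ⊆ η) :
    ∑ ξ ∈ η.powerset.filter (fun ξ => α ⊆ ξ), (-1 : ℝ) ^ ((η \ ξ).card)
      = if α = η then 1 else 0 := by
  have hbij : ∑ ξ ∈ η.powerset.filter (fun ξ => α ⊆ ξ), (-1 : ℝ) ^ ((η \ ξ).card)
      = ∑ m ∈ (η \ α).powerset, (-1 : ℝ) ^ m.card := by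
    refine Finset.sum_nbij' (fun ξ => η \ ξ) (fun m => η \ m) ?_ ?_ ?_ ?_ ?_
    · intro ξ hξ
      simp only [mem_filter, mem_powerset] at hξ ⊢
      exact sdiff_subset_sdiff Subset.rfl hξ.2
    · intro m hm
      simp only [mem_powerset] at hm
      simp only [mem_filter, mem_powerset]
      refine ⟨sdiff_subset, ?_⟩
      rw [subset_sdiff]
      exact ⟨hαη, Finset.disjoint_left.mpr fun x hxα hxm =>
        (Finset.mem_sdiff.mp (hm hxm)).2 hxα⟩
    · intro ξ hξ
      simp only [mem_filter, mem_powerset] at hξ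
      show η \ (η \ ξ) = ξ
      rw [sdiff_sdiff_self_left, inter_eq_right.mpr hξ.1]
    · intro m hm
      simp only [mem_powerset] at hm
      show η \ (η \ m) = m
      rw [sdiff_sdiff_self_left, inter_eq_right.mpr (hm.trans sdiff_subset)]
    · intro ξ _; rfl
  rw [hbij, neg_one_pow_sum]
  by_cases h : α = η
  · subst h; simp
  · rw [if_neg (fun he => h (Subset.antisymm hαη (sdiff_eq_empty_iff_subset.mp he))), if_neg h]

/-- Alternating sum over `{ξ : α ⊆ ξ ⊆ η}` of `(-1)^{|ξ ∖ α|}`. -/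
lemma alt_sum_sdiff_bot {X : Type*} [DecidableEq X] {α η : Finset X} (hαη : α ⊆ η) :
    ∑ ξ ∈ η.powerset.filter (fun ξ => α ⊆ ξ), (-1 : ℝ) ^ ((ξ \ α).card)
      = if α = η then 1 else 0 := by
  have hbij : ∑ ξ ∈ η.powerset.filter (fun ξ => α ⊆ ξ), (-1 : ℝ) ^ ((ξ \ α).card)
      = ∑ m ∈ (η \ α).powerset, (-1 : ℝ) ^ m.card := by
    refine Finset.sum_nbij' (fun ξ => ξ \ α) (fun m => α ∪ m) ?_ ?_ ?_ ?_ ?_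
    · intro ξ hξ
      simp only [mem_filter, mem_powerset] at hξ ⊢
      exact sdiff_subset_sdiff hξ.1 Subset.rfl
    · intro m hm
      simp only [mem_powerset] at hm
      simp only [mem_filter, mem_powerset]
      exact ⟨union_subset hαη (hm.trans sdiff_subset), subset_union_left⟩
    · intro ξ hξ
      simp only [mem_filter, mem_powerset] at hξ
      exact union_sdiff_of_subset hξ.2
    · intro m hm
      simp only [mem_powerset] at hm
      show (α ∪ m) \ α = m
      rw [union_sdiff_cancel_left
        (Finset.disjoint_left.mpr fun x hxα hxm => (Finset.mem_sdiff.mp (hm hxm)).2 hxα)]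
    · intro ξ _; rfl
  rw [hbij, neg_one_pow_sum]
  by_cases h : α = η
  · subst h; simp
  · rw [if_neg (fun he => h (Subset.antisymm hαη (sdiff_eq_empty_iff_subset.mp he))), if_neg h]

/-- Swapping the double sum `∑_{ξ ⊆ η} ∑_{α ⊆ ξ}`. -/
lemma double_sum_swap {X : Type*} [DecidableEq X] (η : Finset X) (f : Finset X → Finset X → ℝ) :
    ∑ ξ ∈ η.powerset, ∑ α ∈ ξ.powerset, f ξ α
      = ∑ α ∈ η.powerset, ∑ ξ ∈ η.powerset.filter (fun ξ => α ⊆ ξ), f ξ α := by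
  refine Finset.sum_comm' ?_
  intro ξ α
  simp only [mem_powerset, mem_filter]
  constructor
  · rintro ⟨h1, h2⟩; exact ⟨⟨h1, h2⟩, h2.trans h1⟩
  · rintro ⟨⟨h1, h2⟩, h3⟩; exact ⟨h1, h2⟩

/-- `K ∘ K⁻¹ = id`. -/
lemma sum_Kinv {X : Type*} [DecidableEq X] (F : Finset X → ℝ) (η : Finset X) :
    ∑ ξ ∈ η.powerset, Kinv F ξ = F η := by
  unfold Kinv
  rw [double_sum_swap η (fun ξ α => (-1 : ℝ) ^ ((ξ \ α).card) * F α)]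
  have : ∀ α ∈ η.powerset,
      ∑ ξ ∈ η.powerset.filter (fun ξ => α ⊆ ξ), (-1 : ℝ) ^ ((ξ \ α).card) * F α
        = (if α = η then 1 else 0) * F α := by
    intro α hα
    rw [← Finset.sum_mul, alt_sum_sdiff_bot (mem_powerset.mp hα)]
  rw [Finset.sum_congr rfl this, Finset.sum_eq_single η]
  · simp
  · intro b _ hb; simp [hb]
  · intro h; exact absurd (mem_powerset.mpr Subset.rfl) h

/-- `K⁻¹ ∘ K = id`. -/
lemma Kinv_sum {X : Type*} [DecidableEq X] (G : Finset X → ℝ) (η : Finset X) :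
    Kinv (fun ξ => ∑ α ∈ ξ.powerset, G α) η = G η := by
  unfold Kinv
  simp only [Finset.mul_sum]
  rw [double_sum_swap η (fun ξ α => (-1 : ℝ) ^ ((η \ ξ).card) * G α)]
  have : ∀ α ∈ η.powerset,
      ∑ ξ ∈ η.powerset.filter (fun ξ => α ⊆ ξ), (-1 : ℝ) ^ ((η \ ξ).card) * G α
        = (if α = η then 1 else 0) * G α := by
    intro α hα
    rw [← Finset.sum_mul, alt_sum_sdiff_top (mem_powerset.mp hα)]
  rw [Finset.sum_congr rfl this, Finset.sum_eq_single η]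
  · simp
  · intro b _ hb; simp [hb]
  · intro h; exact absurd (mem_powerset.mpr Subset.rfl) h

/-- `K (G₁ ⋆ G₂) = (K G₁) · (K G₂)`. -/
lemma sum_starConv {X : Type*} [DecidableEq X] (G₁ G₂ : Finset X → ℝ) (η : Finset X) :
    ∑ ξ ∈ η.powerset, starConv G₁ G₂ ξ
      = (∑ ξ ∈ η.powerset, G₁ ξ) * (∑ ξ ∈ η.powerset, G₂ ξ) := by
  unfold starConv
  have hstep : ∀ ξ ∈ η.powerset,
      ∑ p ∈ (ξ.powerset ×ˢ ξ.powerset).filter (fun p => p.1 ∪ p.2 = ξ), G₁ p.1 * G₂ p.2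
        = ∑ p ∈ (η.powerset ×ˢ η.powerset).filter (fun p => p.1 ∪ p.2 = ξ),
            G₁ p.1 * G₂ p.2 := by
    intro ξ hξ
    rw [mem_powerset] at hξ
    apply Finset.sum_congr _ (fun _ _ => rfl)
    ext p
    simp only [mem_filter, mem_product, mem_powerset]
    constructor
    · rintro ⟨⟨h1, h2⟩, h3⟩; exact ⟨⟨h1.trans hξ, h2.trans hξ⟩, h3⟩
    · rintro ⟨⟨h1, h2⟩, h3⟩
      exact ⟨⟨h3 ▸ subset_union_left, h3 ▸ subset_union_right⟩, h3⟩
  rw [Finset.sum_congr rfl hstep]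
  rw [Finset.sum_fiberwise_of_maps_to (g := fun p : Finset X × Finset X => p.1 ∪ p.2)
      (fun p hp => by
        rw [mem_product] at hp
        rw [mem_powerset]
        exact union_subset (mem_powerset.mp hp.1) (mem_powerset.mp hp.2))]
  rw [Finset.sum_product, Finset.sum_mul_sum]

/-- The inverse K-transform turns pointwise products into ⋆-convolutions:
`K⁻¹(F₁·F₂)(η) = ((K⁻¹F₁) ⋆ (K⁻¹F₂))(η)`. -/
theorem Kinv_mul {X : Type*} [DecidableEq X] (F₁ F₂ : Finset X → ℝ) (η : Finset X) :
    Kinv (fun γ => F₁ γ * F₂ γ) η = starConv (Kinv F₁) (Kinv F₂) η := by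
  have hfun : (fun γ => F₁ γ * F₂ γ)
      = fun γ => ∑ ξ ∈ γ.powerset, starConv (Kinv F₁) (Kinv F₂) ξ := by
    funext γ
    rw [sum_starConv, sum_Kinv, sum_Kinv]
  rw [hfun, Kinv_sum]
end

section
/- For all functions G₁, G₂ : Finset X × Finset X → ℝ and all finsets γ⁺, γ⁻ of X, the two-type K-transform turns the ⋆̂-convolution into a pointwise product: (KK (G₁ ⋆̂ G₂))(γ⁺, γ⁻) = (KK G₁)(γ⁺, γ⁻) · (KK G₂)(γ⁺, γ⁻). -/
open Finset

/-- The two-type K-transform: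
`(KK G)(γ⁺, γ⁻) = ∑_{η⁺ ⊆ γ⁺} ∑_{η⁻ ⊆ γ⁻} G (η⁺, η⁻)`. -/
def KK {X : Type*} [DecidableEq X] (G : Finset X × Finset X → ℝ)
    (γp γm : Finset X) : ℝ :=
  ∑ ηp ∈ γp.powerset, ∑ ηm ∈ γm.powerset, G (ηp, ηm)

/-- The two-type ⋆̂-convolution \eqref{star2}: the sum over ordered triples
of pairwise disjoint finsets partitioning `η⁺` and `η⁻`, of
`G₁ (ξ₁⁺ ∪ ξ₂⁺, ξ₁⁻ ∪ ξ₂⁻) · G₂ (ξ₂⁺ ∪ ξ₃⁺, ξ₂⁻ ∪ ξ₃⁻)`. -/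
def starHat {X : Type*} [DecidableEq X] (G₁ G₂ : Finset X × Finset X → ℝ)
    (ηp ηm : Finset X) : ℝ :=
  ∑ t ∈ (ηp.powerset ×ˢ ηp.powerset ×ˢ ηp.powerset).filter
      (fun t => Disjoint t.1 t.2.1 ∧ Disjoint t.1 t.2.2 ∧ Disjoint t.2.1 t.2.2 ∧
        t.1 ∪ t.2.1 ∪ t.2.2 = ηp),
    ∑ s ∈ (ηm.powerset ×ˢ ηm.powerset ×ˢ ηm.powerset).filter
      (fun s => Disjoint s.1 s.2.1 ∧ Disjoint s.1 s.2.2 ∧ Disjoint s.2.1 s.2.2 ∧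
        s.1 ∪ s.2.1 ∪ s.2.2 = ηm),
      G₁ (t.1 ∪ t.2.1, s.1 ∪ s.2.1) * G₂ (t.2.1 ∪ t.2.2, s.2.1 ∪ s.2.2)


private lemma key {X : Type*} [DecidableEq X] (γ : Finset X)
    (F : Finset X → Finset X → Finset X → ℝ) :
    (∑ η ∈ γ.powerset, ∑ t ∈ (η.powerset ×ˢ η.powerset ×ˢ η.powerset).filter
      (fun t => Disjoint t.1 t.2.1 ∧ Disjoint t.1 t.2.2 ∧ Disjoint t.2.1 t.2.2 ∧
        t.1 ∪ t.2.1 ∪ t.2.2 = η), F t.1 t.2.1 t.2.2)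
    = ∑ p ∈ γ.powerset ×ˢ γ.powerset, F (p.1 \ p.2) (p.1 ∩ p.2) (p.2 \ p.1) := by
  have hs : (∑ η ∈ γ.powerset, ∑ t ∈ (η.powerset ×ˢ η.powerset ×ˢ η.powerset).filter
      (fun t => Disjoint t.1 t.2.1 ∧ Disjoint t.1 t.2.2 ∧ Disjoint t.2.1 t.2.2 ∧
        t.1 ∪ t.2.1 ∪ t.2.2 = η), F t.1 t.2.1 t.2.2)
    = ∑ x ∈ γ.powerset.sigma (fun η => (η.powerset ×ˢ η.powerset ×ˢ η.powerset).filter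
      (fun t => Disjoint t.1 t.2.1 ∧ Disjoint t.1 t.2.2 ∧ Disjoint t.2.1 t.2.2 ∧
        t.1 ∪ t.2.1 ∪ t.2.2 = η)), F x.2.1 x.2.2.1 x.2.2.2 := by
    rw [Finset.sum_sigma]
  rw [hs]
  refine Finset.sum_nbij' (i := fun x => (x.2.1 ∪ x.2.2.1, x.2.2.1 ∪ x.2.2.2))
    (j := fun p => ⟨p.1 ∪ p.2, (p.1 \ p.2, p.1 ∩ p.2, p.2 \ p.1)⟩) ?_ ?_ ?_ ?_ ?_
  · rintro ⟨η, ξ1, ξ2, ξ3⟩ hx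
    simp only [Finset.mem_sigma, Finset.mem_powerset, Finset.mem_filter,
      Finset.mem_product] at hx ⊢
    obtain ⟨hη, ⟨h1, h2, h3⟩, d12, d13, d23, hu⟩ := hx
    exact ⟨Finset.union_subset (h1.trans hη) (h2.trans hη),
      Finset.union_subset (h2.trans hη) (h3.trans hη)⟩
  · rintro ⟨α, β⟩ hp
    simp only [Finset.mem_product, Finset.mem_powerset] at hp
    simp only [Finset.mem_sigma, Finset.mem_powerset, Finset.mem_filter,
      Finset.mem_product]
    refine ⟨Finset.union_subset hp.1 hp.2,
      ⟨(Finset.sdiff_subset).trans Finset.subset_union_left,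
       (Finset.inter_subset_left).trans Finset.subset_union_left,
       (Finset.sdiff_subset).trans Finset.subset_union_right⟩, ?_, ?_, ?_, ?_⟩
    · rw [Finset.disjoint_left]; intro a ha hb
      simp only [Finset.mem_sdiff, Finset.mem_inter] at ha hb; tauto
    · rw [Finset.disjoint_left]; intro a ha hb
      simp only [Finset.mem_sdiff] at ha hb; tauto
    · rw [Finset.disjoint_left]; intro a ha hb
      simp only [Finset.mem_sdiff, Finset.mem_inter] at ha hb; tauto
    · ext a
      simp only [Finset.mem_union, Finset.mem_sdiff, Finset.mem_inter]
      by_cases h : a ∈ β <;> tauto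
  · rintro ⟨η, ξ1, ξ2, ξ3⟩ hx
    simp only [Finset.mem_sigma, Finset.mem_powerset, Finset.mem_filter,
      Finset.mem_product] at hx
    obtain ⟨hη, ⟨h1, h2, h3⟩, d12, d13, d23, hu⟩ := hx
    rw [Finset.disjoint_left] at d12 d13 d23
    have e1 : (ξ1 ∪ ξ2) ∪ (ξ2 ∪ ξ3) = η := by
      rw [← hu]; ext a; simp only [Finset.mem_union]; tauto
    have e2 : (ξ1 ∪ ξ2) \ (ξ2 ∪ ξ3) = ξ1 := by
      ext a
      have r2 := @d12 a; have r3 := @d13 a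
      simp only [Finset.mem_sdiff, Finset.mem_union]; tauto
    have e3 : (ξ1 ∪ ξ2) ∩ (ξ2 ∪ ξ3) = ξ2 := by
      ext a
      have r2 := @d12 a; have r3 := @d13 a; have r4 := @d23 a
      simp only [Finset.mem_inter, Finset.mem_union]; tauto
    have e4 : (ξ2 ∪ ξ3) \ (ξ1 ∪ ξ2) = ξ3 := by
      ext a
      have r3 := @d13 a; have r4 := @d23 a
      simp only [Finset.mem_sdiff, Finset.mem_union]; tauto
    simp only [e1, e2, e3, e4]
  · rintro ⟨α, β⟩ hp
    simp only [Prod.mk.injEq]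
    constructor
    · ext a; simp only [Finset.mem_union, Finset.mem_sdiff, Finset.mem_inter]
      by_cases h : a ∈ β <;> tauto
    · ext a; simp only [Finset.mem_union, Finset.mem_sdiff, Finset.mem_inter]
      by_cases h : a ∈ α <;> tauto
  · rintro ⟨η, ξ1, ξ2, ξ3⟩ hx
    simp only [Finset.mem_sigma, Finset.mem_powerset, Finset.mem_filter,
      Finset.mem_product] at hx
    obtain ⟨hη, ⟨h1, h2, h3⟩, d12, d13, d23, hu⟩ := hx
    rw [Finset.disjoint_left] at d12 d13 d23
    have e2 : (ξ1 ∪ ξ2) \ (ξ2 ∪ ξ3) = ξ1 := by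
      ext a
      have r2 := @d12 a; have r3 := @d13 a
      simp only [Finset.mem_sdiff, Finset.mem_union]; tauto
    have e3 : (ξ1 ∪ ξ2) ∩ (ξ2 ∪ ξ3) = ξ2 := by
      ext a
      have r2 := @d12 a; have r3 := @d13 a; have r4 := @d23 a
      simp only [Finset.mem_inter, Finset.mem_union]; tauto
    have e4 : (ξ2 ∪ ξ3) \ (ξ1 ∪ ξ2) = ξ3 := by
      ext a
      have r3 := @d13 a; have r4 := @d23 a
      simp only [Finset.mem_sdiff, Finset.mem_union]; tauto
    simp only [e2, e3, e4]

private theorem KK_starHat_aux {X : Type*} [DecidableEq X]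
    (G₁ G₂ : Finset X × Finset X → ℝ) (γp γm : Finset X) :
    (∑ ηp ∈ γp.powerset, ∑ ηm ∈ γm.powerset,
      (∑ t ∈ (ηp.powerset ×ˢ ηp.powerset ×ˢ ηp.powerset).filter
        (fun t => Disjoint t.1 t.2.1 ∧ Disjoint t.1 t.2.2 ∧ Disjoint t.2.1 t.2.2 ∧
          t.1 ∪ t.2.1 ∪ t.2.2 = ηp),
      ∑ s ∈ (ηm.powerset ×ˢ ηm.powerset ×ˢ ηm.powerset).filter
        (fun s => Disjoint s.1 s.2.1 ∧ Disjoint s.1 s.2.2 ∧ Disjoint s.2.1 s.2.2 ∧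
          s.1 ∪ s.2.1 ∪ s.2.2 = ηm),
        G₁ (t.1 ∪ t.2.1, s.1 ∪ s.2.1) * G₂ (t.2.1 ∪ t.2.2, s.2.1 ∪ s.2.2)))
    = (∑ a ∈ γp.powerset, ∑ b ∈ γm.powerset, G₁ (a, b)) *
      (∑ c ∈ γp.powerset, ∑ d ∈ γm.powerset, G₂ (c, d)) := by
  calc _ = ∑ ηp ∈ γp.powerset,
        ∑ t ∈ (ηp.powerset ×ˢ ηp.powerset ×ˢ ηp.powerset).filter
          (fun t => Disjoint t.1 t.2.1 ∧ Disjoint t.1 t.2.2 ∧ Disjoint t.2.1 t.2.2 ∧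
            t.1 ∪ t.2.1 ∪ t.2.2 = ηp),
        ∑ ηm ∈ γm.powerset,
        ∑ s ∈ (ηm.powerset ×ˢ ηm.powerset ×ˢ ηm.powerset).filter
          (fun s => Disjoint s.1 s.2.1 ∧ Disjoint s.1 s.2.2 ∧ Disjoint s.2.1 s.2.2 ∧
            s.1 ∪ s.2.1 ∪ s.2.2 = ηm),
          G₁ (t.1 ∪ t.2.1, s.1 ∪ s.2.1) * G₂ (t.2.1 ∪ t.2.2, s.2.1 ∪ s.2.2) := by
        exact Finset.sum_congr rfl fun ηp _ => Finset.sum_comm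
    _ = ∑ ηp ∈ γp.powerset,
        ∑ t ∈ (ηp.powerset ×ˢ ηp.powerset ×ˢ ηp.powerset).filter
          (fun t => Disjoint t.1 t.2.1 ∧ Disjoint t.1 t.2.2 ∧ Disjoint t.2.1 t.2.2 ∧
            t.1 ∪ t.2.1 ∪ t.2.2 = ηp),
        ∑ q ∈ γm.powerset ×ˢ γm.powerset,
          G₁ (t.1 ∪ t.2.1, q.1) * G₂ (t.2.1 ∪ t.2.2, q.2) := by
        refine Finset.sum_congr rfl fun ηp _ => Finset.sum_congr rfl fun t _ => ?_
        rw [key γm (fun a b c => G₁ (t.1 ∪ t.2.1, a ∪ b) * G₂ (t.2.1 ∪ t.2.2, b ∪ c))]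
        refine Finset.sum_congr rfl fun q _ => ?_
        rw [Finset.sdiff_union_inter, Finset.inter_comm,
          Finset.union_comm (q.2 ∩ q.1), Finset.sdiff_union_inter]
    _ = ∑ p ∈ γp.powerset ×ˢ γp.powerset, ∑ q ∈ γm.powerset ×ˢ γm.powerset,
          G₁ (p.1, q.1) * G₂ (p.2, q.2) := by
        rw [key γp (fun a b c => ∑ q ∈ γm.powerset ×ˢ γm.powerset,
          G₁ (a ∪ b, q.1) * G₂ (b ∪ c, q.2))]
        refine Finset.sum_congr rfl fun p _ => Finset.sum_congr rfl fun q _ => ?_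
        rw [Finset.sdiff_union_inter, Finset.inter_comm,
          Finset.union_comm (p.2 ∩ p.1), Finset.sdiff_union_inter]
    _ = _ := by
        rw [Finset.sum_product, Finset.sum_mul_sum]
        refine Finset.sum_congr rfl fun a _ => Finset.sum_congr rfl fun c _ => ?_
        rw [Finset.sum_product, Finset.sum_mul_sum]

/-- The two-type K-transform turns the ⋆̂-convolution into a pointwise product:
`(KK (G₁ ⋆̂ G₂))(γ⁺, γ⁻) = (KK G₁)(γ⁺, γ⁻) · (KK G₂)(γ⁺, γ⁻)`. -/
theorem KK_starHat {X : Type*} [DecidableEq X]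
    (G₁ G₂ : Finset X × Finset X → ℝ) (γp γm : Finset X) :
    KK (fun q => starHat G₁ G₂ q.1 q.2) γp γm = KK G₁ γp γm * KK G₂ γp γm := by
  simp only [KK, starHat]
  exact KK_starHat_aux G₁ G₂ γp γm
end

section
/- Let γ and ω be disjoint finsets of X and G : Finset X → ℝ. Then the increment of the K-transform under adding the points of ω is (KG)(γ ∪ ω) − (KG)(γ) = ∑_{η ⊆ γ} ∑_{∅ ≠ ζ ⊆ ω} G(η ∪ ζ), where the inner sum runs over all nonempty subsets ζ of ω. -/
open Finset

/-- Increment of the K-transform under adding the points of a disjoint finset `ω`: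
`(KG)(γ ∪ ω) − (KG)(γ) = ∑_{η ⊆ γ} ∑_{∅ ≠ ζ ⊆ ω} G (η ∪ ζ)`. -/
theorem K_increment_union {X : Type*} [DecidableEq X] (γ ω : Finset X)
    (h : Disjoint γ ω) (G : Finset X → ℝ) :
    (∑ η ∈ (γ ∪ ω).powerset, G η) - (∑ η ∈ γ.powerset, G η)
      = ∑ η ∈ γ.powerset, ∑ ζ ∈ ω.powerset.filter (· ≠ ∅), G (η ∪ ζ) := by
  have key : ∑ η ∈ (γ ∪ ω).powerset, G η
      = ∑ η ∈ γ.powerset, ∑ ζ ∈ ω.powerset, G (η ∪ ζ) := by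
    rw [← Finset.sum_product']
    apply Finset.sum_nbij' (fun s => (s ∩ γ, s ∩ ω)) (fun p => p.1 ∪ p.2)
    · intro s hs
      simp only [mem_powerset] at hs
      simp [mem_product, inter_subset_right]
    · intro p hp
      simp only [mem_product, mem_powerset] at hp ⊢
      exact union_subset_union hp.1 hp.2
    · intro s hs
      simp only [mem_powerset] at hs
      rw [← inter_union_distrib_left, inter_eq_left.2 hs]
    · intro p hp
      simp only [mem_product, mem_powerset] at hp
      have h1 : p.1 ∩ ω = ∅ := disjoint_iff_inter_eq_empty.1 (h.mono_left hp.1)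
      have h2 : p.2 ∩ γ = ∅ := disjoint_iff_inter_eq_empty.1 (h.symm.mono_left hp.2)
      have e1 : p.1 ∩ γ = p.1 := inter_eq_left.2 hp.1
      have e2 : p.2 ∩ ω = p.2 := inter_eq_left.2 hp.2
      ext <;> simp [union_inter_distrib_right, h1, h2, e1, e2]
    · intro s hs
      rw [← inter_union_distrib_left, inter_eq_left.2 (mem_powerset.1 hs)]
  have split : ∀ η ∈ γ.powerset, ∑ ζ ∈ ω.powerset, G (η ∪ ζ)
      = G η + ∑ ζ ∈ ω.powerset.filter (· ≠ ∅), G (η ∪ ζ) := by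
    intro η _
    rw [← Finset.sum_filter_add_sum_filter_not ω.powerset (· = ∅)]
    congr 1
    · rw [Finset.filter_eq']
      simp
  rw [key, Finset.sum_congr rfl split, Finset.sum_add_distrib]
  ring
end

section
/- Let γ be a finset of X, x ∈ γ, ω a finset of X disjoint from γ, and G : Finset X → ℝ. Then (KG)((γ ∖ {x}) ∪ ω) − (KG)(γ) = ∑_{η ⊆ γ ∖ {x}} ( ∑_{∅ ≠ ζ ⊆ ω} G(η ∪ ζ) − G(η ∪ {x}) ), where the inner sum runs over all nonempty subsets ζ of ω. -/
open Finset

lemma sum_powerset_disjUnion {X : Type*} [DecidableEq X] (s t : Finset X)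
    (h : Disjoint s t) (f : Finset X → ℝ) :
    ∑ η ∈ (s ∪ t).powerset, f η = ∑ η ∈ s.powerset, ∑ ζ ∈ t.powerset, f (η ∪ ζ) := by
  induction t using Finset.induction_on generalizing f with
  | empty => simp
  | @insert a t ha ih =>
    have hd : Disjoint s t := h.mono_right (Finset.subset_insert a t)
    have has : a ∉ s ∪ t := by
      simp only [Finset.mem_union, not_or]
      exact ⟨fun hs => (Finset.disjoint_left.mp h) hs (Finset.mem_insert_self a t), ha⟩
    rw [Finset.union_insert, Finset.sum_powerset_insert has, ih hd f,
      ih hd (fun u => f (insert a u)), ← Finset.sum_add_distrib]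
    refine Finset.sum_congr rfl fun η hη => ?_
    rw [Finset.sum_powerset_insert ha, add_right_inj]
    exact Finset.sum_congr rfl fun ζ hζ => by rw [Finset.union_insert]

/-- Increment of the K-transform under the jump of a point `x ∈ γ` to the points
of a disjoint finset `ω`:
`(KG)((γ ∖ {x}) ∪ ω) − (KG)(γ)
  = ∑_{η ⊆ γ ∖ {x}} ( ∑_{∅ ≠ ζ ⊆ ω} G (η ∪ ζ) − G (η ∪ {x}) )`. -/
theorem K_increment_jump {X : Type*} [DecidableEq X] (γ : Finset X) (x : X)
    (hx : x ∈ γ) (ω : Finset X) (h : Disjoint γ ω) (G : Finset X → ℝ) :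
    (∑ η ∈ ((γ.erase x) ∪ ω).powerset, G η) - (∑ η ∈ γ.powerset, G η)
      = ∑ η ∈ (γ.erase x).powerset,
          ((∑ ζ ∈ ω.powerset.filter (· ≠ ∅), G (η ∪ ζ)) - G (η ∪ {x})) := by
  have hd : Disjoint (γ.erase x) ω := h.mono_left (Finset.erase_subset x γ)
  have hγ : ∑ η ∈ γ.powerset, G η
      = ∑ η ∈ (γ.erase x).powerset, G η
        + ∑ η ∈ (γ.erase x).powerset, G (insert x η) := by
    conv_lhs => rw [← Finset.insert_erase hx]
    rw [Finset.sum_powerset_insert (Finset.notMem_erase x γ)]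
  have key : ∀ η ∈ (γ.erase x).powerset,
      ∑ ζ ∈ ω.powerset, G (η ∪ ζ)
        = G η + ∑ ζ ∈ ω.powerset.filter (· ≠ ∅), G (η ∪ ζ) := by
    intro η hη
    rw [← Finset.sum_filter_add_sum_filter_not ω.powerset (· = ∅)]
    congr 1
    rw [Finset.filter_eq' ω.powerset ∅]
    simp
  have hins : ∀ η ∈ (γ.erase x).powerset, G (insert x η) = G (η ∪ {x}) := by
    intro η hη
    congr 1
    ext y
    simp [Finset.mem_union, or_comm]
  rw [sum_powerset_disjUnion _ _ hd, hγ, Finset.sum_congr rfl key,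
    Finset.sum_add_distrib, Finset.sum_sub_distrib, Finset.sum_congr rfl hins]
  ring
end

section
/- Let d : X → ℝ and define the pure death generator on functions F : Finset X → ℝ by (LF)(γ) := ∑_{x ∈ γ} d(x)·(F(γ ∖ {x}) − F(γ)). Then for every G : Finset X → ℝ and every finset η of X, the image of L under the K-transform is the multiplication operator by minus the accumulated death rate: K⁻¹(L(KG))(η) = −(∑_{x ∈ η} d(x))·G(η). -/
open Finset

/-- The K-transform: `(KG)(γ) = ∑_{η ⊆ γ} G η`. -/
def Ktr {X : Type*} [DecidableEq X] (G : Finset X → ℝ) (γ : Finset X) : ℝ :=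
  ∑ η ∈ γ.powerset, G η

/-- The pure death generator `(LF)(γ) = ∑_{x ∈ γ} d(x)·(F(γ ∖ {x}) − F(γ))`. -/
def deathGen {X : Type*} [DecidableEq X] (d : X → ℝ) (F : Finset X → ℝ)
    (γ : Finset X) : ℝ :=
  ∑ x ∈ γ, d x * (F (γ.erase x) - F γ)

lemma sum_pow_neg_one_real {X : Type*} [DecidableEq X] (s : Finset X) :
    (∑ A ∈ s.powerset, (-1 : ℝ) ^ A.card) = if s = ∅ then 1 else 0 := by
  have h := Finset.sum_powerset_neg_one_pow_card (x := s)
  have : (∑ A ∈ s.powerset, (-1 : ℝ) ^ A.card)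
      = ((∑ A ∈ s.powerset, (-1 : ℤ) ^ A.card : ℤ) : ℝ) := by push_cast; rfl
  rw [this, h]
  split_ifs <;> simp

lemma Kinv_Ktr {X : Type*} [DecidableEq X] (G : Finset X → ℝ) (η : Finset X) :
    Kinv (Ktr G) η = G η := by
  unfold Kinv Ktr
  simp_rw [Finset.mul_sum]
  rw [Finset.sum_comm' (s' := fun ζ => η.powerset.filter (ζ ⊆ ·)) (t' := η.powerset)
    (by
      intro ξ ζ
      simp only [Finset.mem_powerset, Finset.mem_filter]
      constructor
      · rintro ⟨h1, h2⟩; exact ⟨⟨h1, h2⟩, h2.trans h1⟩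
      · rintro ⟨⟨h1, h2⟩, _⟩; exact ⟨h1, h2⟩)]
  have key : ∀ ζ ∈ η.powerset,
      (∑ ξ ∈ η.powerset.filter (ζ ⊆ ·), (-1 : ℝ) ^ ((η \ ξ).card) * G ζ)
        = (if ζ = η then (1:ℝ) else 0) * G ζ := by
    intro ζ hζ
    rw [Finset.mem_powerset] at hζ
    rw [← Finset.sum_mul]
    congr 1
    have hbij : (∑ ξ ∈ η.powerset.filter (ζ ⊆ ·), (-1 : ℝ) ^ ((η \ ξ).card))
        = ∑ A ∈ (η \ ζ).powerset, (-1 : ℝ) ^ A.card := by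
      refine Finset.sum_nbij' (fun ξ => η \ ξ) (fun A => η \ A) ?_ ?_ ?_ ?_ ?_
      · intro ξ hξ
        simp only [Finset.mem_filter, Finset.mem_powerset] at hξ ⊢
        exact sdiff_le_sdiff le_rfl hξ.2
      · intro A hA
        simp only [Finset.mem_powerset] at hA
        simp only [Finset.mem_filter, Finset.mem_powerset]
        refine ⟨Finset.sdiff_subset, ?_⟩
        intro x hx
        have hxη : x ∈ η := hζ hx
        refine Finset.mem_sdiff.mpr ⟨hxη, fun hxA => ?_⟩
        have := hA hxA
        exact (Finset.mem_sdiff.mp this).2 hx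
      · intro ξ hξ
        simp only [Finset.mem_filter, Finset.mem_powerset] at hξ
        exact Finset.sdiff_sdiff_eq_self hξ.1
      · intro A hA
        simp only [Finset.mem_powerset] at hA
        exact Finset.sdiff_sdiff_eq_self (hA.trans Finset.sdiff_subset)
      · intro ξ hξ; rfl
    rw [hbij, sum_pow_neg_one_real]
    by_cases h : ζ = η
    · simp [h]
    · have hne : η \ ζ ≠ ∅ := by
        intro he
        apply h
        refine Finset.Subset.antisymm hζ (fun x hx => ?_)
        by_contra hxζ
        have : x ∈ η \ ζ := Finset.mem_sdiff.mpr ⟨hx, hxζ⟩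
        simp [he] at this
      simp [h, hne]
  rw [Finset.sum_congr rfl key]
  simp

lemma deathGen_Ktr {X : Type*} [DecidableEq X] (d : X → ℝ) (G : Finset X → ℝ) (γ : Finset X) :
    deathGen d (Ktr G) γ = Ktr (fun η => -(∑ x ∈ η, d x) * G η) γ := by
  unfold deathGen Ktr
  have step1 : ∀ x ∈ γ,
      d x * ((∑ η ∈ (γ.erase x).powerset, G η) - ∑ η ∈ γ.powerset, G η)
        = -∑ η ∈ (γ.erase x).powerset, d x * G (insert x η) := by
    intro x hx
    have hnot : x ∉ γ.erase x := Finset.notMem_erase x γ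
    rw [show (∑ η ∈ γ.powerset, G η) = ∑ η ∈ (insert x (γ.erase x)).powerset, G η by
      rw [Finset.insert_erase hx]]
    rw [Finset.sum_powerset_insert hnot, ← Finset.mul_sum]
    ring
  rw [Finset.sum_congr rfl step1]
  simp_rw [neg_mul, Finset.sum_mul, Finset.sum_neg_distrib]
  rw [Finset.sum_comm' (s' := fun x => γ.powerset.filter (x ∈ ·)) (t' := γ)
    (by
      intro η x
      simp only [Finset.mem_powerset, Finset.mem_filter]
      constructor
      · rintro ⟨h1, h2⟩; exact ⟨⟨h1, h2⟩, h1 h2⟩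
      · rintro ⟨⟨h1, h2⟩, _⟩; exact ⟨h1, h2⟩)]
  congr 1
  refine Finset.sum_congr rfl fun x hx => ?_
  refine (Finset.sum_nbij' (fun η => Finset.erase η x) (fun ξ => insert x ξ) ?_ ?_ ?_ ?_ ?_).symm
  · intro η hη
    simp only [Finset.mem_filter, Finset.mem_powerset] at hη ⊢
    exact Finset.erase_subset_erase x hη.1
  · intro ξ hξ
    simp only [Finset.mem_powerset] at hξ
    simp only [Finset.mem_filter, Finset.mem_powerset]
    refine ⟨?_, Finset.mem_insert_self x ξ⟩
    exact Finset.insert_subset hx ((hξ.trans (Finset.erase_subset x γ)))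
  · intro η hη
    simp only [Finset.mem_filter, Finset.mem_powerset] at hη
    exact Finset.insert_erase hη.2
  · intro ξ hξ
    simp only [Finset.mem_powerset] at hξ
    exact Finset.erase_insert (fun hxξ => (Finset.notMem_erase x γ) (hξ hxξ))
  · intro η hη
    simp only [Finset.mem_filter, Finset.mem_powerset] at hη
    rw [Finset.insert_erase hη.2]

/-- The image of the pure death generator under the K-transform is
multiplication by minus the accumulated death rate:
`K⁻¹(L(KG))(η) = −(∑_{x ∈ η} d x)·G η`. -/
theorem Khat_deathGen {X : Type*} [DecidableEq X] (d : X → ℝ)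
    (G : Finset X → ℝ) (η : Finset X) :
    Kinv (deathGen d (Ktr G)) η = -(∑ x ∈ η, d x) * G η := by
  have h : deathGen d (Ktr G) = Ktr (fun η => -(∑ x ∈ η, d x) * G η) := by
    funext γ; exact deathGen_Ktr d G γ
  rw [h, Kinv_Ktr]
end

section
/- Let a : ℝ^d → ℝ be nonnegative and Lebesgue integrable, and define, for bounded G : Finset(ℝ^d) → ℝ with y ↦ G(s ∪ {y}) Lebesgue measurable for every finset s, the operator (L̂G)(η) := −|η|·G(η) + ∑_{x ∈ η} ∫_{ℝ^d} a(x − y)·( G((η ∖ {x}) ∪ {y}) + G(η ∪ {y}) ) dy − (∫_{ℝ^d} a(y) dy)·∑_{x ∈ η} G(η ∖ {x}). Then L̂ satisfies the derivation-type identity: for all disjoint finsets η and ξ, (L̂G)(η ∪ ξ) = (L̂(G(· ∪ ξ)))(η) + (L̂(G(· ∪ η)))(ξ). -/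
open Finset MeasureTheory

/-- The image `L̂ = K⁻¹ L_CM K` of the contact model generator under the
K-transform, computed explicitly in Section 6:
`(L̂G)(η) = −|η|·G(η) + ∑_{x ∈ η} ∫ a(x − y)·(G((η∖{x}) ∪ {y}) + G(η ∪ {y})) dy
  − (∫ a)·∑_{x ∈ η} G(η ∖ {x})`. -/
noncomputable def LhatCM {d : ℕ} [DecidableEq (EuclideanSpace ℝ (Fin d))]
    (a : EuclideanSpace ℝ (Fin d) → ℝ)
    (G : Finset (EuclideanSpace ℝ (Fin d)) → ℝ)
    (η : Finset (EuclideanSpace ℝ (Fin d))) : ℝ :=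
  -(η.card : ℝ) * G η
    + (∑ x ∈ η, ∫ y, a (x - y) * (G (insert y (η.erase x)) + G (insert y η)))
    - (∫ y, a y) * ∑ x ∈ η, G (η.erase x)

/-- `L̂ = K̂_CM` satisfies the derivation-type identity \eqref{dual-sum}:
for disjoint `η`, `ξ`,
`(L̂G)(η ∪ ξ) = (L̂(G(· ∪ ξ)))(η) + (L̂(G(· ∪ η)))(ξ)`. -/
theorem LhatCM_derivation {d : ℕ} [DecidableEq (EuclideanSpace ℝ (Fin d))]
    (a : EuclideanSpace ℝ (Fin d) → ℝ) (ha_nonneg : ∀ x, 0 ≤ a x)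
    (ha_int : Integrable a)
    (G : Finset (EuclideanSpace ℝ (Fin d)) → ℝ)
    (hG_bdd : ∃ C, ∀ s, |G s| ≤ C)
    (hG_meas : ∀ s : Finset (EuclideanSpace ℝ (Fin d)),
      Measurable fun y => G (insert y s))
    (η ξ : Finset (EuclideanSpace ℝ (Fin d))) (hdisj : Disjoint η ξ) :
    LhatCM a G (η ∪ ξ)
      = LhatCM a (fun s => G (s ∪ ξ)) η + LhatCM a (fun s => G (s ∪ η)) ξ := by
  classical
  have hηξ : ∀ x ∈ η, x ∉ ξ := fun x hx => Finset.disjoint_left.mp hdisj hx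
  have hξη : ∀ x ∈ ξ, x ∉ η := fun x hx => Finset.disjoint_right.mp hdisj hx
  have hcomm : η ∪ ξ = ξ ∪ η := Finset.union_comm η ξ
  have h1 : ∀ x ∈ η, (η ∪ ξ).erase x = η.erase x ∪ ξ := by
    intro x hx
    rw [Finset.erase_union_distrib, Finset.erase_eq_of_notMem (hηξ x hx)]
  have h2 : ∀ x ∈ ξ, (η ∪ ξ).erase x = η ∪ ξ.erase x := by
    intro x hx
    rw [Finset.erase_union_distrib, Finset.erase_eq_of_notMem (hξη x hx)]
  have s1 : (∑ x ∈ η, ∫ y, a (x - y) *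
        (G (insert y (η.erase x) ∪ ξ) + G (insert y η ∪ ξ)))
      = ∑ x ∈ η, ∫ y, a (x - y) *
        (G (insert y ((η ∪ ξ).erase x)) + G (insert y (η ∪ ξ))) := by
    refine Finset.sum_congr rfl fun x hx => ?_
    congr 1
    funext y
    rw [h1 x hx, Finset.insert_union, Finset.insert_union]
  have s2 : (∑ x ∈ ξ, ∫ y, a (x - y) *
        (G (insert y (ξ.erase x) ∪ η) + G (insert y ξ ∪ η)))
      = ∑ x ∈ ξ, ∫ y, a (x - y) *
        (G (insert y ((η ∪ ξ).erase x)) + G (insert y (η ∪ ξ))) := by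
    refine Finset.sum_congr rfl fun x hx => ?_
    congr 1
    funext y
    rw [h2 x hx, Finset.insert_union, Finset.insert_union,
      Finset.union_comm (ξ.erase x) η, Finset.union_comm ξ η]
  have s3 : (∑ x ∈ η, G (η.erase x ∪ ξ)) = ∑ x ∈ η, G ((η ∪ ξ).erase x) :=
    Finset.sum_congr rfl fun x hx => by rw [h1 x hx]
  have s4 : (∑ x ∈ ξ, G (ξ.erase x ∪ η)) = ∑ x ∈ ξ, G ((η ∪ ξ).erase x) :=
    Finset.sum_congr rfl fun x hx => by
      rw [Finset.union_comm, h2 x hx]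
  simp only [LhatCM]
  rw [Finset.card_union_of_disjoint hdisj, Finset.sum_union hdisj,
    Finset.sum_union hdisj, s1, s2, s3, s4, Finset.union_comm ξ η]
  push_cast
  ring
end

section
/- Let X be a type, f, g : X → ℝ and F, G : X → X → ℝ. Assume (H1): (f x + G y x)·(f y + g y) = (f y + G x y)·(f x + g x), (H2): (F y x + g x)·(f y + g y) = (F x y + g y)·(f x + g x), (H3): G y x · g y = G x y · g x, and (H4): F y x · f y = F x y · f x, all for all x, y. Then for all x, y: f x · g x · (f x · g y − f y · g x) · (F x y · g y − G x y · f y) = 0. -/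
/-- The necessary condition \eqref{ness}:
from (H1)–(H4) deduce
`f x · g x · (f x · g y − f y · g x) · (F x y · g y − G x y · f y) = 0`. -/
theorem ness {X : Type*} (f g : X → ℝ) (F G : X → X → ℝ)
    (H1 : ∀ x y, (f x + G y x) * (f y + g y) = (f y + G x y) * (f x + g x))
    (H2 : ∀ x y, (F y x + g x) * (f y + g y) = (F x y + g y) * (f x + g x))
    (H3 : ∀ x y, G y x * g y = G x y * g x)
    (H4 : ∀ x y, F y x * f y = F x y * f x) :
    ∀ x y, f x * g x * (f x * g y - f y * g x) * (F x y * g y - G x y * f y) = 0 := by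
  intro x y
  linear_combination (f x * g x * f y * g y) * H2 x y
    - (f x * g x * f y * g y + f x * g x * g y * g y) * H4 x y
    - (f x * g x * f y * g y) * H1 x y
    + (f x * g x * f y * g y + f x * g x * f y * f y) * H3 x y
    + 2 * f x * g x * f y * (g y * H1 x y - (g y + f y) * H3 x y)
end
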